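/- For every natural number n, the ∞pede profiles p_n and π_n are always-convergent: □conv(p_n) and □conv(π_n). -/

import Mathlib

noncomputable section

/-- The two agents. -/
inductive Ag : Type
  | A
  | B
deriving DecidableEq

/-- The set of choices `{1, 2}`. -/
inductive Choice : Type
  | one
  | two
deriving DecidableEq

/-- The polynomial functor whose final coalgebra is the set of finite or
infinite strategy profiles: a node is either an ending position carrying a
utility assignment (no children) or an internal position carrying an agent
and a choice (two children, indexed by `Bool`). -/
def SPF (Agent : Type) : PFunctor.{0} :=
  ⟨(Agent → ℝ) ⊕ (Agent × Choice), fun x => Sum.rec (fun _ => Empty) (fun _ => Bool) x⟩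

/-- Finite or infinite strategy profiles, as the M-type (final coalgebra). -/
def StratProf (Agent : Type) : Type :=
  (SPF Agent).M

/-- The ending position `⟨u⟩`. -/
def leafP {Agent : Type} (u : Agent → ℝ) : StratProf Agent :=
  PFunctor.M.mk ⟨Sum.inl u, fun e => Empty.elim e⟩

/-- The strategy profile `⟨a, c, s₁, s₂⟩`. -/
def nodeP {Agent : Type} (a : Agent) (c : Choice) (s₁ s₂ : StratProf Agent) :
    StratProf Agent :=
  PFunctor.M.mk ⟨Sum.inr (a, c), fun b => bif b then s₂ else s₁⟩

/-- The child selected by choice `c`. -/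
def cchild {Agent : Type} (c : Choice) (s₁ s₂ : StratProf Agent) : StratProf Agent :=
  match c with
  | .one => s₁
  | .two => s₂

/-- `conv s`: following the choices of `s` reaches an ending position after
finitely many steps (inductive definition). -/
inductive Conv {Agent : Type} : StratProf Agent → Prop
  | leaf (u : Agent → ℝ) : Conv (leafP u)
  | node1 (a : Agent) (s₁ s₂ : StratProf Agent) :
      Conv s₁ → Conv (nodeP a Choice.one s₁ s₂)
  | node2 (a : Agent) (s₁ s₂ : StratProf Agent) :
      Conv s₂ → Conv (nodeP a Choice.two s₁ s₂)

/-- The graph of the (partial) utility assignment `ŝ`: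
`UtilR s u` holds iff following the choices of `s` reaches the ending
position `⟨u⟩`. -/
inductive UtilR {Agent : Type} : StratProf Agent → (Agent → ℝ) → Prop
  | leaf (u : Agent → ℝ) : UtilR (leafP u) u
  | node1 (a : Agent) (s₁ s₂ : StratProf Agent) (u : Agent → ℝ) :
      UtilR s₁ u → UtilR (nodeP a Choice.one s₁ s₂) u
  | node2 (a : Agent) (s₁ s₂ : StratProf Agent) (u : Agent → ℝ) :
      UtilR s₂ u → UtilR (nodeP a Choice.two s₁ s₂) u

open Classical in
/-- The utility assignment `ŝ` (an arbitrary default on non-convergent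
profiles). -/
def util {Agent : Type} (s : StratProf Agent) : Agent → ℝ :=
  if h : ∃ u, UtilR s u then h.choose else fun _ => 0

/-- `□P`, the coinductive `always` modality: `P` holds at every position of
the strategy profile (greatest fixed point). -/
def Always {Agent : Type} (P : StratProf Agent → Prop) (s : StratProf Agent) : Prop :=
  ∃ R : StratProf Agent → Prop, R s ∧ ∀ t, R t →
    P t ∧ ∀ a c s₁ s₂, t = nodeP a c s₁ s₂ → R s₁ ∧ R s₂

/-- `PE s`: `s` is always-convergent and the choice at the root of `s` is at
least as good, for the agent who owns the root, as the other choice. -/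
def PE {Agent : Type} (s : StratProf Agent) : Prop :=
  Always Conv s ∧
    (∀ a s₁ s₂, s = nodeP a Choice.one s₁ s₂ → util s₁ a ≥ util s₂ a) ∧
    (∀ a s₁ s₂, s = nodeP a Choice.two s₁ s₂ → util s₂ a ≥ util s₁ a)

/-- Subgame perfect equilibrium: `□PE`. -/
def SPE {Agent : Type} : StratProf Agent → Prop :=
  Always PE

/-- `s =_g s'`: the two strategy profiles have the same underlying game
(coinductive definition). -/
def SameGame {Agent : Type} (s s' : StratProf Agent) : Prop :=
  ∃ R : StratProf Agent → StratProf Agent → Prop, R s s' ∧ ∀ t t', R t t' →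
    (∃ u, t = leafP u ∧ t' = leafP u) ∨
    (∃ a c c' s₁ s₂ s₁' s₂',
      t = nodeP a c s₁ s₂ ∧ t' = nodeP a c' s₁' s₂' ∧ R s₁ s₁' ∧ R s₂ s₂')

/-- `Rat_∞`: rationality for finite or infinite strategy profiles
(coinductive definition). -/
def RatInf {Agent : Type} (s : StratProf Agent) : Prop :=
  ∃ R : StratProf Agent → Prop, R s ∧ ∀ t, R t →
    (∃ u, t = leafP u) ∨
    (∃ a c s₁ s₂ s₁' s₂', t = nodeP a c s₁ s₂ ∧
      SameGame (nodeP a c s₁' s₂') (nodeP a c s₁ s₂) ∧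
      SPE (nodeP a c s₁' s₂') ∧ R (cchild c s₁ s₂))

/-- `diverg`: following the choices never reaches an ending position
(coinductive definition). -/
def Diverg {Agent : Type} (s : StratProf Agent) : Prop :=
  ∃ R : StratProf Agent → Prop, R s ∧ ∀ t, R t →
    ∃ a c s₁ s₂, t = nodeP a c s₁ s₂ ∧ R (cchild c s₁ s₂)

/-- Utilities of the leaf reached when Alice takes at her `n`-th position of
the ∞pede: `A ↦ 2^(2n+2)`, `B ↦ 2^(2n)`. -/
def uAp (n : ℕ) : Ag → ℝ := fun x =>
  match x with
  | Ag.A => (2 : ℝ) ^ (2 * n + 2)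
  | Ag.B => (2 : ℝ) ^ (2 * n)

/-- Utilities of the leaf reached when Bob takes at his `n`-th position of
the ∞pede: `A ↦ 2^(2n+1)`, `B ↦ 2^(2n+3)`. -/
def uBp (n : ℕ) : Ag → ℝ := fun x =>
  match x with
  | Ag.A => (2 : ℝ) ^ (2 * n + 1)
  | Ag.B => (2 : ℝ) ^ (2 * n + 3)

/-- States for the mutual corecursion defining the `always take` profiles
`p_n` and `π_n` of the ∞pede. -/
inductive PedSt : Type
  | pS (n : ℕ)
  | piS (n : ℕ)
  | lS (u : Ag → ℝ)

/-- One step of the corecursion: `p_n = ⟨A, 1, ⟨A↦2^(2n+2), B↦2^(2n)⟩, π_n⟩`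
and `π_n = ⟨B, 1, ⟨A↦2^(2n+1), B↦2^(2n+3)⟩, p_{n+1}⟩`. -/
def pedStep : PedSt → (SPF Ag).Obj PedSt
  | PedSt.lS u => ⟨Sum.inl u, fun e => Empty.elim e⟩
  | PedSt.pS n =>
      ⟨Sum.inr (Ag.A, Choice.one), fun b => bif b then PedSt.piS n else PedSt.lS (uAp n)⟩
  | PedSt.piS n =>
      ⟨Sum.inr (Ag.B, Choice.one), fun b => bif b then PedSt.pS (n + 1) else PedSt.lS (uBp n)⟩

/-- The ∞pede profile `p_n` where both agents always take. -/
def pped (n : ℕ) : StratProf Ag :=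
  PFunctor.M.corec pedStep (PedSt.pS n)

/-- The ∞pede profile `π_n` where both agents always take. -/
def piped (n : ℕ) : StratProf Ag :=
  PFunctor.M.corec pedStep (PedSt.piS n)

/-! The profiles `p_m`, `π_m` and the ending positions form a set of profiles closed under
taking children, and `conv` holds on all of it because each `p_m`, `π_m` chooses its leaf
child; this set is the coinductive witness for `□conv`. -/

section Profiles

variable {Agent : Type}

theorem leafP_ne_nodeP {u : Agent → ℝ} {a : Agent} {c : Choice} {s₁ s₂ : StratProf Agent} :
    leafP u ≠ nodeP a c s₁ s₂ := fun h => by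
  injection PFunctor.M.mk_inj h with h
  exact Sum.inl_ne_inr h

theorem nodeP_inj {a a' : Agent} {c c' : Choice} {s₁ s₂ s₁' s₂' : StratProf Agent}
    (h : nodeP a c s₁ s₂ = nodeP a' c' s₁' s₂') :
    a = a' ∧ c = c' ∧ s₁ = s₁' ∧ s₂ = s₂' := by
  injection PFunctor.M.mk_inj h with hlabel hchildren
  obtain ⟨rfl, rfl⟩ := Prod.mk.inj (Sum.inr_injective hlabel)
  exact ⟨rfl, rfl, congrFun hchildren false, congrFun hchildren true⟩

theorem corec_eq_leafP {α : Type} {f : α → (SPF Agent).Obj α} {x : α} {u : Agent → ℝ}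
    {children : (SPF Agent).B (Sum.inl u) → α} (hx : f x = ⟨Sum.inl u, children⟩) :
    PFunctor.M.corec f x = leafP u := by
  rw [PFunctor.M.corec_def, hx, leafP]
  exact congrArg PFunctor.M.mk (congrArg (Sigma.mk _) (funext fun e => e.elim))

theorem corec_eq_nodeP {α : Type} {f : α → (SPF Agent).Obj α} {x : α} {a : Agent} {c : Choice}
    {children : (SPF Agent).B (Sum.inr (a, c)) → α} (hx : f x = ⟨Sum.inr (a, c), children⟩) :
    PFunctor.M.corec f x =
      nodeP a c (PFunctor.M.corec f (children false)) (PFunctor.M.corec f (children true)) := by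
  rw [PFunctor.M.corec_def, hx]
  unfold nodeP
  exact congrArg PFunctor.M.mk (congrArg (Sigma.mk _) (funext fun b => by cases b <;> rfl))

end Profiles

theorem pped_eq (n : ℕ) : pped n = nodeP Ag.A Choice.one (leafP (uAp n)) (piped n) := by
  rw [pped, corec_eq_nodeP rfl, corec_eq_leafP rfl]
  rfl

theorem piped_eq (n : ℕ) : piped n = nodeP Ag.B Choice.one (leafP (uBp n)) (pped (n + 1)) := by
  rw [piped, corec_eq_nodeP rfl, corec_eq_leafP rfl]
  rfl

/-- The ∞pede profiles `p_n` and `π_n` are always-convergent: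
`∀ n, □conv(p_n) ∧ □conv(π_n)`. -/
theorem alwaysConv_pped_piped (n : ℕ) :
    Always Conv (pped n) ∧ Always Conv (piped n) := by
  let R : StratProf Ag → Prop := fun t =>
    (∃ m, t = pped m ∨ t = piped m) ∨ ∃ u, t = leafP u
  have closed : ∀ t, R t → Conv t ∧ ∀ a c s₁ s₂, t = nodeP a c s₁ s₂ → R s₁ ∧ R s₂ := by
    rintro t (⟨m, rfl | rfl⟩ | ⟨u, rfl⟩)
    · rw [pped_eq]
      refine ⟨.node1 _ _ _ (.leaf _), fun a c s₁ s₂ h => ?_⟩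
      obtain ⟨-, -, rfl, rfl⟩ := nodeP_inj h
      exact ⟨.inr ⟨_, rfl⟩, .inl ⟨m, .inr rfl⟩⟩
    · rw [piped_eq]
      refine ⟨.node1 _ _ _ (.leaf _), fun a c s₁ s₂ h => ?_⟩
      obtain ⟨-, -, rfl, rfl⟩ := nodeP_inj h
      exact ⟨.inr ⟨_, rfl⟩, .inl ⟨m + 1, .inl rfl⟩⟩
    · exact ⟨.leaf u, fun a c s₁ s₂ h => absurd h leafP_ne_nodeP⟩
  exact ⟨⟨R, .inl ⟨n, .inl rfl⟩, closed⟩, ⟨R, .inl ⟨n, .inr rfl⟩, closed⟩⟩
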